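/- Let θ > 0, let (w_j)_{j≥2} be positive real numbers, let k ≥ 1 and n₁,…,n_k ≥ 1 be integers with n = n₁ + ⋯ + n_k, and set D = ∏_{j=1}^n ( (j−1) w_j + θ ) where the j = 1 factor is θ (with w_1 arbitrary). Then lim_{d→∞} d(d−1)⋯(d−k+1) · ( n! / (n₁! ⋯ n_k!) ) · ∏_{i=1}^k [ (θ/d) ∏_{j=2}^{n_i} ( (j−1) w_j + θ/d ) ] / D = ( n! θ^k / (n₁ ⋯ n_k) ) · ∏_{i=1}^k ∏_{j=2}^{n_i} w_j / D. (With w_j = E[(1−W)^{j−2}] this is the Λ-Fleming-Viot analogue of the Ewens sampling formula obtained by letting θ_i = θ/d and d → ∞; taking w_j ≡ 1 recovers the Ewens sampling formula.) -/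

import Mathlib

open Finset Filter
open scoped Nat

/-!
Put `x = 1/d`. Since `d (d-1) ⋯ (d-k+1) · (θ/d)^k = θ^k ∏_{i<k} (1 - i x)`, the expression is, for
`d ≥ 1`, the value at `x = 1/d` of a polynomial in `x`, so its limit is the value at `x = 0`.
There `∏_{j=2}^{m} (j-1) = (m-1)!` and `m! = m (m-1)!` turn the multinomial coefficient
`n! / ∏ nᵢ!` into `n! / ∏ nᵢ`.
-/

lemma prod_Icc_two_natCast_sub_one {R : Type*} [CommRing R] (m : ℕ) :
    ∏ j ∈ Icc 2 m, ((j : R) - 1) = (m - 1)! := by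
  rw [← Finset.Ico_add_one_right_eq_Icc, prod_Ico_eq_prod_range, ← prod_range_add_one_eq_factorial]
  push_cast
  exact prod_congr (congrArg range (by omega)) fun i _ => by ring

lemma prod_natCast_factorial_eq_prod_mul_prod_factorial_pred {R ι : Type*} [CommSemiring R]
    (s : Finset ι) (m : ι → ℕ) (hm : ∀ i ∈ s, m i ≠ 0) :
    ∏ i ∈ s, ((m i)! : R) = (∏ i ∈ s, (m i : R)) * ∏ i ∈ s, ((m i - 1)! : R) := by
  rw [← prod_mul_distrib]
  exact prod_congr rfl fun i hi => by rw [← Nat.cast_mul, Nat.mul_factorial_pred (hm i hi)]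

lemma prod_range_sub_div_pow {K : Type*} [Field K] (k : ℕ) {d : K} (hd : d ≠ 0) :
    (∏ i ∈ range k, (d - i)) / d ^ k = ∏ i ∈ range k, (1 - i * d⁻¹) := by
  rw [← card_range k, ← prod_const, card_range, ← prod_div_distrib]
  exact prod_congr rfl fun i _ => by field_simp

theorem stmt19 (θ : ℝ) (w : ℕ → ℝ)
    (k : ℕ) (nv : Fin k → ℕ) (hnv : ∀ i, 1 ≤ nv i) :
    Tendsto (fun d : ℕ =>
        (∏ i ∈ Finset.range k, ((d : ℝ) - (i : ℝ))) *
        ((Nat.factorial (∑ i, nv i) : ℝ) / ∏ i, (Nat.factorial (nv i) : ℝ)) *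
        (∏ i, ((θ / (d : ℝ)) *
          ∏ j ∈ Finset.Icc 2 (nv i), (((j : ℝ) - 1) * w j + θ / (d : ℝ)))) /
        (∏ j ∈ Finset.Icc 1 (∑ i, nv i), (((j : ℝ) - 1) * w j + θ)))
      atTop
      (nhds ((Nat.factorial (∑ i, nv i) : ℝ) * θ ^ k / (∏ i, (nv i : ℝ)) *
        (∏ i, ∏ j ∈ Finset.Icc 2 (nv i), w j) /
        (∏ j ∈ Finset.Icc 1 (∑ i, nv i), (((j : ℝ) - 1) * w j + θ)))) := by
  set n := ∑ i, nv i
  set D := ∏ j ∈ Icc 1 n, (((j : ℝ) - 1) * w j + θ)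
  let g : ℝ → ℝ := fun x => (∏ i ∈ range k, (1 - i * x)) * ((n ! : ℝ) / ∏ i, ((nv i)! : ℝ)) *
    (θ ^ k * ∏ i, ∏ j ∈ Icc 2 (nv i), (((j : ℝ) - 1) * w j + θ * x)) / D
  have hg : Continuous g := by fun_prop
  have hg_zero : g 0 = (n ! : ℝ) * θ ^ k / (∏ i, (nv i : ℝ)) *
      (∏ i, ∏ j ∈ Icc 2 (nv i), w j) / D := by
    have hnv0 : ∀ i, nv i ≠ 0 := fun i => Nat.one_le_iff_ne_zero.mp (hnv i)
    simp only [g, mul_zero, add_zero, sub_zero, prod_const_one, one_mul, prod_mul_distrib,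
      prod_Icc_two_natCast_sub_one,
      prod_natCast_factorial_eq_prod_mul_prod_factorial_pred univ nv fun i _ => hnv0 i]
    field_simp
  have hg_inv : ∀ d : ℕ, 1 ≤ d → g (d : ℝ)⁻¹ = (∏ i ∈ range k, ((d : ℝ) - i)) *
      ((n ! : ℝ) / ∏ i, ((nv i)! : ℝ)) *
      (∏ i, ((θ / d) * ∏ j ∈ Icc 2 (nv i), (((j : ℝ) - 1) * w j + θ / d))) / D := by
    intro d hd
    have hd0 : (d : ℝ) ≠ 0 := by positivity
    simp only [g, ← prod_range_sub_div_pow k hd0, prod_mul_distrib, prod_const, card_univ,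
      Fintype.card_fin, div_eq_mul_inv θ, inv_pow]
    field_simp
  rw [← hg_zero]
  exact ((hg.tendsto 0).comp tendsto_inv_atTop_nhds_zero_nat).congr'
    (eventually_atTop.2 ⟨1, hg_inv⟩)
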